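/- arXiv:1408.3948 — 6 statements merged into one kernel-verified Lean document; each statement's English description precedes it below -/
import Mathlib

section
/- For square-summable grid functions p and q on ℤ, ⟨D(pq), q⟩ = (Δx/2)⟨(D₊p)(Dq), q⟩ + (1/2)⟨(S⁻q)(Dp), q⟩, where D is the symmetric difference operator and S⁻ the backward shift. -/
/-- Forward difference of a grid function on ℤ with mesh Δx. -/
noncomputable def Dp (Δx : ℝ) (u : ℤ → ℝ) (j : ℤ) : ℝ := (u (j + 1) - u j) / Δx

/-- Backward difference of a grid function on ℤ with mesh Δx. -/
noncomputable def Dm (Δx : ℝ) (u : ℤ → ℝ) (j : ℤ) : ℝ := (u j - u (j - 1)) / Δx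

/-- Symmetric difference D = (D₊ + D₋)/2. -/
noncomputable def Dsym (Δx : ℝ) (u : ℤ → ℝ) (j : ℤ) : ℝ := (Dp Δx u j + Dm Δx u j) / 2

/-- Backward shift S⁻u(j) = u(j−1). -/
def Sm (u : ℤ → ℝ) (j : ℤ) : ℝ := u (j - 1)

/-- Discrete inner product ⟨p,q⟩ = Δx Σ_j p_j q_j. -/
noncomputable def dinner (Δx : ℝ) (p q : ℤ → ℝ) : ℝ := Δx * ∑' j : ℤ, p j * q j

lemma abs_mul_summable (u v : ℤ → ℝ) (hu : Summable fun j => (u j)^2)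
    (hv : Summable fun j => (v j)^2) : Summable fun j => |u j * v j| := by
  apply Summable.of_nonneg_of_le (fun j => abs_nonneg _) (fun j => ?_) ((hu.add hv).div_const 2)
  rw [abs_mul]
  nlinarith [sq_nonneg (|u j| - |v j|), sq_abs (u j), sq_abs (v j)]

lemma trip_summable (p q : ℤ → ℝ) (hp : Summable fun j => (p j)^2)
    (hq : Summable fun j => (q j)^2) (a b c : ℤ) :
    Summable fun j : ℤ => p (j + a) * q (j + b) * q (j + c) := by
  set M := Real.sqrt (∑' j, (q j)^2) with hMdef
  have hM : ∀ j, |q j| ≤ M := by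
    intro j
    rw [← Real.sqrt_sq_eq_abs]
    exact Real.sqrt_le_sqrt (Summable.le_tsum hq j (fun i _ => sq_nonneg _))
  have hpa : Summable fun j : ℤ => (p (j + a))^2 := hp.comp_injective (add_left_injective a)
  have hqb : Summable fun j : ℤ => (q (j + b))^2 := hq.comp_injective (add_left_injective b)
  have h1 : Summable fun j : ℤ => |p (j + a) * q (j + b)| := abs_mul_summable _ _ hpa hqb
  apply Summable.of_abs
  apply Summable.of_nonneg_of_le (fun j => abs_nonneg _) (fun j => ?_) (h1.mul_right M)
  rw [abs_mul]
  exact mul_le_mul_of_nonneg_left (hM _) (abs_nonneg _)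

theorem stmt_4 (Δx : ℝ) (hΔx : 0 < Δx) (p q : ℤ → ℝ)
    (hp : Summable (fun j => (p j) ^ 2)) (hq : Summable (fun j => (q j) ^ 2)) :
    dinner Δx (Dsym Δx (fun i => p i * q i)) q
      = Δx / 2 * dinner Δx (fun i => Dp Δx p i * Dsym Δx q i) q
        + 1 / 2 * dinner Δx (fun i => Sm q i * Dsym Δx p i) q := by
  have hΔ : Δx ≠ 0 := hΔx.ne'
  have trip := trip_summable p q hp hq
  set B : ℤ → ℝ := fun j => Dp Δx p j * Dsym Δx q j * q j with hBdef
  set C : ℤ → ℝ := fun j => Sm q j * Dsym Δx p j * q j with hCdef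
  set f : ℤ → ℝ := fun j => (p j + p (j - 1)) * (q j * q (j - 1)) with hfdef
  have hB : Summable B := by
    refine (((((trip 1 1 0).sub (trip 1 (-1) 0)).sub (trip 0 1 0)).add
      (trip 0 (-1) 0)).div_const (2 * Δx * Δx)).congr fun j => ?_
    simp only [hBdef, Dp, Dm, Dsym, Int.add_neg_one, add_zero]
    field_simp
    ring
  have hC : Summable C := by
    refine (((trip 1 (-1) 0).sub (trip (-1) (-1) 0)).div_const (2 * Δx)).congr fun j => ?_
    simp only [hCdef, Dp, Dm, Dsym, Sm, Int.add_neg_one, add_zero]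
    field_simp
    ring
  have hf : Summable f := by
    refine ((trip 0 0 (-1)).add (trip (-1) 0 (-1))).congr fun j => ?_
    simp only [hfdef, Int.add_neg_one, add_zero]
    ring
  have hf1 : Summable fun j => f (j + 1) := hf.comp_injective (add_left_injective 1)
  have hdiff : Summable fun j => f (j + 1) - f j := hf1.sub hf
  have hshift : ∑' j, f (j + 1) = ∑' j, f j := (Equiv.addRight (1 : ℤ)).tsum_eq f
  have htel : ∑' j, (f (j + 1) - f j) = 0 := by
    rw [Summable.tsum_sub hf1 hf, hshift, sub_self]
  have key : ∀ j, Dsym Δx (fun i => p i * q i) j * q j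
      = Δx / 2 * B j + (1 / 2 * C j + (f (j + 1) - f j) / (4 * Δx)) := by
    intro j
    simp only [hBdef, hCdef, hfdef, Dp, Dm, Dsym, Sm, add_sub_cancel_right]
    field_simp
    ring
  simp only [dinner]
  rw [tsum_congr key, Summable.tsum_add (hB.mul_left _) ((hC.mul_left _).add (hdiff.div_const _)),
    Summable.tsum_add (hC.mul_left _) (hdiff.div_const _), tsum_mul_left, tsum_mul_left,
    tsum_div_const, htel]
  ring
end

section
/- The discrete Hilbert transform ℍ on ℓ²(ℤ) is an isometry: ‖ℍu‖ = ‖u‖ for all u ∈ ℓ²(ℤ). -/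
/-- Discrete Hilbert transform on ℤ. -/
noncomputable def Hdisc (u : ℤ → ℝ) (j : ℤ) : ℝ :=
  (1 / Real.pi) * ∑' k : ℤ, if k = j then 0
    else u k * (1 - (-1 : ℝ) ^ (j - k)) / ((j : ℝ) - (k : ℝ))

/-!
`ℍ` is convolution with the kernel `K m = 2 / (π m)` for odd `m` and `K m = 0` for even `m`.
The translates `e_k = K (· - k)` form an orthonormal family in `ℓ²(ℤ)`: `∑ K m ^ 2 = 1` is
`∑_{m odd} 1 / m ^ 2 = π ^ 2 / 4`, and for even `n ≠ 0` the partial fractions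
`K m * K (m + n) = 2 / (π n) * (K m - K (m + n))` make `∑ K m * K (m + n)` telescope to `0`
(for odd `n` every term vanishes by parity). Hence `ℍ u = ∑ u_k e_k` is the synthesis map of an
orthonormal family, which is an isometry.
-/

open Real Filter Topology Finset SummationFilter

local notation "ℓ²(ℤ)" => lp (fun _ : ℤ ↦ ℝ) 2

theorem hasSum_sub_comp_add_zero {α : Type*} [AddCommGroup α] [TopologicalSpace α]
    [IsTopologicalAddGroup α] [T2Space α] {g : ℤ → α} (hg : Tendsto g cofinite (𝓝 0)) (n : ℕ)
    (hs : Summable fun m ↦ g m - g (m + n)) : HasSum (fun m ↦ g m - g (m + n)) 0 := by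
  obtain ⟨S, hS⟩ := hs
  -- `S` is also the limit of the symmetric partial sums, which telescope to `2 n` boundary terms.
  have h_sym : Tendsto (fun N : ℕ ↦ ∑ m ∈ Ico (-(N : ℤ)) N, (g m - g (m + n))) atTop (𝓝 S) :=
    hasSum_symmetricIco_int_iff.mp (hS.mono_left (symmetricIco ℤ).le_atTop)
  have h_tele (N : ℕ) : ∑ m ∈ Ico (-(N : ℤ)) N, (g m - g (m + n))
      = ∑ i ∈ range n, (g (-N + i) - g (N + i)) := by
    have h_split (m : ℤ) : g m - g (m + n) = ∑ i ∈ range n, (g (m + i) - g (m + 1 + i)) := by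
      have := sum_range_sub' (fun i : ℕ ↦ g (m + i)) n
      push_cast at this
      rw [add_zero] at this
      rw [← this]
      exact sum_congr rfl fun i _ ↦ by ring_nf
    simp_rw [h_split]
    rw [sum_comm]
    exact sum_congr rfl fun i _ ↦ sum_Ico_int_sub N fun m ↦ g (m + i)
  have h_shift {s : ℤ} (hs0 : s ≠ 0) (i : ℕ) :
      Tendsto (fun N : ℕ ↦ g (s * N + i)) atTop (𝓝 0) := by
    have h_inj : Function.Injective fun N : ℕ ↦ s * N + i := fun a b h ↦ by
      simpa [hs0] using h
    exact hg.comp (Nat.cofinite_eq_atTop ▸ h_inj.tendsto_cofinite)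
  have h_bdry : Tendsto (fun N : ℕ ↦ ∑ i ∈ range n, (g (-N + i) - g (N + i))) atTop (𝓝 0) := by
    simpa using tendsto_finsetSum (range n) fun i _ ↦
      (h_shift (s := -1) (by norm_num) i).sub (h_shift one_ne_zero i)
  rwa [tendsto_nhds_unique h_sym (h_bdry.congr fun N ↦ (h_tele N).symm)] at hS

lemma memℓp_two_of_summable_sq {ι : Type*} {f : ι → ℝ} (hf : Summable fun i ↦ f i ^ 2) :
    Memℓp f 2 :=
  (memℓp_gen_iff (by norm_num)).2 (by simpa using hf)

lemma lp.norm_sq_eq_tsum_sq {ι : Type*} (f : lp (fun _ : ι ↦ ℝ) 2) :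
    ‖f‖ ^ 2 = ∑' i, f i ^ 2 := by
  simpa using lp.norm_rpow_eq_tsum (by norm_num) f

lemma hasSum_one_div_odd_sq :
    HasSum (fun k : ℕ ↦ 1 / (2 * k + 1 : ℝ) ^ 2) (π ^ 2 / 8) := by
  have h_even : HasSum (fun k : ℕ ↦ 1 / ((2 * k : ℕ) : ℝ) ^ 2) (π ^ 2 / 24) := by
    have := hasSum_zeta_two.mul_left (1 / 4)
    rw [show 1 / 4 * (π ^ 2 / 6) = π ^ 2 / 24 by ring] at this
    exact this.congr_fun fun k ↦ by push_cast; ring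
  have h_odd : Summable fun k : ℕ ↦ 1 / ((2 * k + 1 : ℕ) : ℝ) ^ 2 :=
    hasSum_zeta_two.summable.comp_injective fun a b h ↦ by simpa using h
  have h_sum := (HasSum.even_add_odd (f := fun n : ℕ ↦ 1 / (n : ℝ) ^ 2) h_even
    h_odd.hasSum).unique hasSum_zeta_two
  rw [show π ^ 2 / 8 = ∑' k : ℕ, 1 / ((2 * k + 1 : ℕ) : ℝ) ^ 2 by linarith]
  exact_mod_cast h_odd.hasSum

/-- For `m ≠ 0` this is the coefficient `(1 - (-1) ^ m) / (π m)` in the definition of `Hdisc`. -/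
noncomputable def hilbertKernel (m : ℤ) : ℝ := if Odd m then 2 / (π * m) else 0

lemma hilbertKernel_of_even {m : ℤ} (hm : Even m) : hilbertKernel m = 0 := by
  simp [hilbertKernel, Int.not_odd_iff_even.mpr hm]

lemma hilbertKernel_neg (m : ℤ) : hilbertKernel (-m) = -hilbertKernel m := by
  by_cases hm : Odd m
  · simp [hilbertKernel, hm, div_neg]
  · simp [hilbertKernel, hm]

lemma Hdisc_eq_tsum (u : ℤ → ℝ) (j : ℤ) : Hdisc u j = ∑' k, u k * hilbertKernel (j - k) := by
  rw [Hdisc, ← tsum_mul_left]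
  refine tsum_congr fun k ↦ ?_
  rcases eq_or_ne k j with rfl | hkj
  · simp [hilbertKernel]
  rw [if_neg hkj]
  rcases Int.even_or_odd (j - k) with h | h
  · rw [h.neg_one_zpow, hilbertKernel_of_even h]; ring
  · rw [h.neg_one_zpow, hilbertKernel, if_pos h]
    have : (j : ℝ) - k ≠ 0 := sub_ne_zero.mpr (by exact_mod_cast hkj.symm)
    push_cast
    field_simp
    ring

lemma hasSum_hilbertKernel_sq : HasSum (fun m : ℤ ↦ hilbertKernel m ^ 2) 1 := by
  have h_odd (k : ℤ) :
      hilbertKernel (2 * k + 1) ^ 2 = 4 / π ^ 2 * (1 / (2 * k + 1 : ℝ) ^ 2) := by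
    simp only [hilbertKernel, odd_two_mul_add_one, if_true]
    push_cast
    field_simp
    norm_num
  have h_nat : HasSum (fun k : ℕ ↦ hilbertKernel (2 * k + 1) ^ 2) (1 / 2) := by
    have := hasSum_one_div_odd_sq.mul_left (4 / π ^ 2)
    rw [show 4 / π ^ 2 * (π ^ 2 / 8) = 1 / 2 by field_simp; ring] at this
    exact this.congr_fun fun k ↦ by simpa using h_odd k
  have h_int : HasSum (fun k : ℤ ↦ hilbertKernel (2 * k + 1) ^ 2) 1 := by
    rw [show (1 : ℝ) = 1 / 2 + 1 / 2 by norm_num]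
    refine HasSum.of_nat_of_neg_add_one (f := fun k : ℤ ↦ hilbertKernel (2 * k + 1) ^ 2) h_nat
      (h_nat.congr_fun fun k ↦ ?_)
    rw [show 2 * -((k : ℤ) + 1) + 1 = -(2 * k + 1) by ring, hilbertKernel_neg, neg_sq]
  refine ((Function.Injective.hasSum_iff (fun a b h ↦ by simpa using h)) ?_).mp h_int
  rintro m hm
  rw [hilbertKernel_of_even (Int.not_odd_iff_even.mp ?_), zero_pow two_ne_zero]
  rintro ⟨k, rfl⟩
  exact hm ⟨k, by ring⟩

lemma tendsto_hilbertKernel_cofinite : Tendsto hilbertKernel cofinite (𝓝 0) := by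
  have h := hasSum_hilbertKernel_sq.summable.tendsto_cofinite_zero.sqrt
  simp_rw [Real.sqrt_sq_eq_abs, Real.sqrt_zero] at h
  exact tendsto_zero_iff_norm_tendsto_zero.mpr h

lemma summable_hilbertKernel_sub_sq (k : ℤ) : Summable fun j ↦ hilbertKernel (j - k) ^ 2 :=
  hasSum_hilbertKernel_sq.summable.comp_injective (sub_left_injective (b := k))

noncomputable def hilbertKernelShift (k : ℤ) : ℓ²(ℤ) :=
  ⟨fun j ↦ hilbertKernel (j - k), memℓp_two_of_summable_sq (summable_hilbertKernel_sub_sq k)⟩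

lemma inner_hilbertKernelShift (a b : ℤ) :
    inner ℝ (hilbertKernelShift a) (hilbertKernelShift b)
      = ∑' m, hilbertKernel m * hilbertKernel (m + (b - a)) := by
  rw [lp.inner_eq_tsum, ← (Equiv.addRight b).tsum_eq]
  refine tsum_congr fun m ↦ ?_
  simp [hilbertKernelShift, add_sub_assoc]

lemma summable_hilbertKernel_mul_add (n : ℤ) :
    Summable fun m ↦ hilbertKernel m * hilbertKernel (m + n) := by
  refine (lp.summable_inner (hilbertKernelShift 0) (hilbertKernelShift (-n))).congr fun m ↦ ?_
  simp [hilbertKernelShift, mul_comm]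

lemma hilbertKernel_mul_add_of_odd {n : ℤ} (hn : Odd n) (m : ℤ) :
    hilbertKernel m * hilbertKernel (m + n) = 0 := by
  rcases Int.even_or_odd m with hm | hm
  · rw [hilbertKernel_of_even hm, zero_mul]
  · rw [hilbertKernel_of_even (hm.add_odd hn), mul_zero]

lemma hilbertKernel_mul_add_of_even {n : ℤ} (hn : Even n) (hn0 : n ≠ 0) (m : ℤ) :
    hilbertKernel m * hilbertKernel (m + n)
      = 2 / (π * n) * (hilbertKernel m - hilbertKernel (m + n)) := by
  rcases Int.even_or_odd m with hm | hm
  · simp [hilbertKernel_of_even hm, hilbertKernel_of_even (hm.add hn)]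
  have hmn := hm.add_even hn
  have hm0 : (m : ℝ) ≠ 0 := by exact_mod_cast (show m ≠ 0 by rintro rfl; simp at hm)
  have hmn0 : ((m + n : ℤ) : ℝ) ≠ 0 := by exact_mod_cast (show m + n ≠ 0 by grind)
  have hn0' : (n : ℝ) ≠ 0 := by exact_mod_cast hn0
  simp only [hilbertKernel, hm, hmn, if_true]
  push_cast at hmn0 ⊢
  field_simp
  ring

lemma tsum_hilbertKernel_mul_add (n : ℤ) :
    ∑' m, hilbertKernel m * hilbertKernel (m + n) = if n = 0 then 1 else 0 := by
  split_ifs with hn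
  · simpa [hn, sq] using hasSum_hilbertKernel_sq.tsum_eq
  wlog hpos : 0 < n generalizing n
  · rw [← (Equiv.neg ℤ).tsum_eq, ← this (-n) (neg_ne_zero.mpr hn) (by omega)]
    refine tsum_congr fun m ↦ ?_
    rw [Equiv.neg_apply, show -m + n = -(m + -n) by ring, hilbertKernel_neg, hilbertKernel_neg,
      neg_mul_neg]
  rcases Int.even_or_odd n with heven | hodd
  · have hs : Summable fun m ↦ hilbertKernel m - hilbertKernel (m + n) := by
      refine ((summable_hilbertKernel_mul_add n).mul_left (π * n / 2)).congr fun m ↦ ?_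
      have : (n : ℝ) ≠ 0 := by exact_mod_cast hn
      rw [hilbertKernel_mul_add_of_even heven hn]
      field_simp
    rw [tsum_congr (hilbertKernel_mul_add_of_even heven hn), tsum_mul_left]
    lift n to ℕ using hpos.le
    rw [(hasSum_sub_comp_add_zero tendsto_hilbertKernel_cofinite n hs).tsum_eq, mul_zero]
  · simp [hilbertKernel_mul_add_of_odd hodd]

lemma orthonormal_hilbertKernelShift : Orthonormal ℝ hilbertKernelShift := by
  rw [orthonormal_iff_ite]
  intro a b
  rw [inner_hilbertKernelShift, tsum_hilbertKernel_mul_add]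
  simp [sub_eq_zero, eq_comm]

noncomputable def hilbertTransformLp : ℓ²(ℤ) →ₗᵢ[ℝ] ℓ²(ℤ) :=
  orthonormal_hilbertKernelShift.orthogonalFamily.linearIsometry

lemma hasSum_hilbertTransformLp_apply (u : ℓ²(ℤ)) (j : ℤ) :
    HasSum (fun k ↦ u k * hilbertKernel (j - k)) (hilbertTransformLp u j) :=
  (orthonormal_hilbertKernelShift.orthogonalFamily.hasSum_linearIsometry u).map
    (lp.evalCLM ℝ (fun _ : ℤ ↦ ℝ) 2 j) (lp.evalCLM ℝ (fun _ : ℤ ↦ ℝ) 2 j).continuous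

lemma Hdisc_eq_hilbertTransformLp (u : ℓ²(ℤ)) (j : ℤ) : Hdisc u j = hilbertTransformLp u j := by
  rw [Hdisc_eq_tsum, (hasSum_hilbertTransformLp_apply u j).tsum_eq]

theorem tsum_Hdisc_sq {u : ℤ → ℝ} (hu : Summable fun j ↦ u j ^ 2) :
    ∑' j, Hdisc u j ^ 2 = ∑' j, u j ^ 2 := by
  let U : ℓ²(ℤ) := ⟨u, memℓp_two_of_summable_sq hu⟩
  calc ∑' j, Hdisc u j ^ 2 = ‖hilbertTransformLp U‖ ^ 2 := by
        simp_rw [lp.norm_sq_eq_tsum_sq, ← Hdisc_eq_hilbertTransformLp]; rfl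
    _ = ‖U‖ ^ 2 := by rw [LinearIsometry.norm_map]
    _ = ∑' j, u j ^ 2 := lp.norm_sq_eq_tsum_sq U

theorem stmt_10_general (Δx : ℝ) (u : ℤ → ℝ)
    (hu : Summable (fun j => (u j) ^ 2)) :
    Real.sqrt (Δx * ∑' j : ℤ, (Hdisc u j) ^ 2)
      = Real.sqrt (Δx * ∑' j : ℤ, (u j) ^ 2) := by
  rw [tsum_Hdisc_sq hu]

theorem stmt_10 (Δx : ℝ) (hΔx : 0 < Δx) (u : ℤ → ℝ)
    (hu : Summable (fun j => (u j) ^ 2)) :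
    Real.sqrt (Δx * ∑' j : ℤ, (Hdisc u j) ^ 2)
      = Real.sqrt (Δx * ∑' j : ℤ, (u j) ^ 2) :=
  stmt_10_general Δx u hu
end

section
/- For u ∈ H²(ℝ), the second difference of grid values is bounded by the second derivative: Δx Σ_j (D₊D₋u(x_j))² ≤ ‖u''‖²_{L²(ℝ)}. -/
/-!
Taylor's formula with integral remainder about `x_j` writes `Δx² D₊D₋u(x_j)` as
`∫ u''(x) (Δx - |x - x_j|) dx` over `[x_{j-1}, x_{j+1}]`. Cauchy–Schwarz on each half bounds its
square by `Δx² ∫ u''² (Δx - |x - x_j|)`, and since the hat functions `Δx - |x - x_j|` centred at the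
grid points add up to `Δx`, summing over `j` gives `Δx⁴ Σ_j (D₊D₋u(x_j))² ≤ Δx³ ∫ u''²`.
-/

open MeasureTheory Set

section CauchySchwarz

variable {α : Type*} [MeasurableSpace α] {μ : Measure α} {f w : α → ℝ}

theorem sq_integral_mul_le_integral_mul_integral_sq_mul (hw : 0 ≤ᵐ[μ] w) (hwi : Integrable w μ)
    (hfw : Integrable (fun x => f x * w x) μ) (hf2w : Integrable (fun x => f x ^ 2 * w x) μ) :
    (∫ x, f x * w x ∂μ) ^ 2 ≤ (∫ x, w x ∂μ) * ∫ x, f x ^ 2 * w x ∂μ := by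
  set W := ∫ x, w x ∂μ
  set I := ∫ x, f x * w x ∂μ
  set J := ∫ x, f x ^ 2 * w x ∂μ
  have hquad : ∀ t : ℝ, 0 ≤ W * (t * t) + 2 * I * t + J := fun t => by
    have hexpand : ∫ x, (f x + t) ^ 2 * w x ∂μ = W * (t * t) + 2 * I * t + J := by
      simp_rw [show ∀ x, (f x + t) ^ 2 * w x = t * t * w x + 2 * t * (f x * w x) + f x ^ 2 * w x
        from fun x => by ring]
      rw [integral_add (by exact (hwi.const_mul _).add (hfw.const_mul _)) hf2w,
        integral_add (hwi.const_mul _) (hfw.const_mul _), integral_const_mul, integral_const_mul]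
      ring
    exact hexpand ▸ integral_nonneg_of_ae (hw.mono fun x hx => mul_nonneg (sq_nonneg _) hx)
  have := discrim_le_zero hquad
  rw [discrim] at this
  linarith

end CauchySchwarz

theorem sq_intervalIntegral_mul_le {f w : ℝ → ℝ} {a c : ℝ} (hac : a ≤ c)
    (hw : ∀ x ∈ Icc a c, 0 ≤ w x) (hwc : ContinuousOn w (Icc a c))
    (hf : IntervalIntegrable f volume a c)
    (hf2 : IntervalIntegrable (fun x => f x ^ 2) volume a c) :
    (∫ x in a..c, f x * w x) ^ 2 ≤ (∫ x in a..c, w x) * ∫ x in a..c, f x ^ 2 * w x := by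
  rw [← uIcc_of_le hac] at hwc
  simp only [intervalIntegral.integral_of_le hac]
  exact sq_integral_mul_le_integral_mul_integral_sq_mul
    ((ae_restrict_iff' measurableSet_Ioc).2 (.of_forall fun x hx => hw x (Ioc_subset_Icc_self hx)))
    (hwc.intervalIntegrable.1) (hf.mul_continuousOn hwc).1 (hf2.mul_continuousOn hwc).1

theorem taylor_integral_remainder_of_hasDerivAt {u u' u'' : ℝ → ℝ} {a c : ℝ}
    (hu' : ∀ x ∈ uIcc a c, HasDerivAt u (u' x) x) (hu'' : ∀ x ∈ uIcc a c, HasDerivAt u' (u'' x) x)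
    (hint : IntervalIntegrable u'' volume a c) :
    ∫ x in a..c, u'' x * (c - x) = u c - u a - (c - a) * u' a := by
  have hF : ∀ x ∈ uIcc a c,
      HasDerivAt (fun x => u x + (c - x) * u' x) (u'' x * (c - x)) x := fun x hx =>
    ((hu' x hx).add (((hasDerivAt_id x).const_sub c).mul (hu'' x hx))).congr_deriv (by simp; ring)
  rw [intervalIntegral.integral_eq_sub_of_hasDerivAt hF (hint.mul_continuousOn (by fun_prop))]
  ring

theorem sq_second_difference_le {u u' u'' : ℝ → ℝ} {a b c : ℝ} (hab : a ≤ b) (hc : c - b = b - a)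
    (hu' : ∀ x ∈ Icc a c, HasDerivAt u (u' x) x) (hu'' : ∀ x ∈ Icc a c, HasDerivAt u' (u'' x) x)
    (hint : IntervalIntegrable u'' volume a c)
    (hint2 : IntervalIntegrable (fun x => u'' x ^ 2) volume a c) :
    (u c - 2 * u b + u a) ^ 2 ≤
      (b - a) ^ 2 * ((∫ x in a..b, u'' x ^ 2 * (x - a)) + ∫ x in b..c, u'' x ^ 2 * (c - x)) := by
  have hbc : b ≤ c := by linarith
  have hb : b ∈ uIcc a c := by rw [uIcc_of_le (hab.trans hbc)]; exact ⟨hab, hbc⟩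
  have hsubL : uIcc a b ⊆ uIcc a c := uIcc_subset_uIcc_left hb
  have hsubR : uIcc b c ⊆ uIcc a c := uIcc_subset_uIcc_right hb
  rw [← uIcc_of_le (hab.trans hbc)] at hu' hu''
  have hR : ∫ x in b..c, u'' x * (c - x) = u c - u b - (c - b) * u' b :=
    taylor_integral_remainder_of_hasDerivAt (fun x hx => hu' x (hsubR hx))
      (fun x hx => hu'' x (hsubR hx)) (hint.mono_set hsubR)
  have hL : ∫ x in a..b, u'' x * (x - a) = u a - u b - (a - b) * u' b := by
    rw [intervalIntegral.integral_symm, ← intervalIntegral.integral_neg,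
      ← taylor_integral_remainder_of_hasDerivAt (fun x hx => hu' x (hsubL (uIcc_comm b a ▸ hx)))
        (fun x hx => hu'' x (hsubL (uIcc_comm b a ▸ hx))) (hint.mono_set hsubL).symm]
    congr 1 with x
    ring
  have hRcs := sq_intervalIntegral_mul_le (w := fun x => c - x) hbc
    (fun x hx => sub_nonneg.2 hx.2) (by fun_prop) (hint.mono_set hsubR) (hint2.mono_set hsubR)
  have hLcs := sq_intervalIntegral_mul_le (w := fun x => x - a) hab
    (fun x hx => sub_nonneg.2 hx.1) (by fun_prop) (hint.mono_set hsubL) (hint2.mono_set hsubL)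
  have hwR : ∫ x in b..c, (c - x) = (c - b) ^ 2 / 2 := by
    simp [intervalIntegral.integral_comp_sub_left (fun x => x)]
  have hwL : ∫ x in a..b, (x - a) = (b - a) ^ 2 / 2 := by
    simp [intervalIntegral.integral_comp_sub_right (fun x => x)]
  have hD :
      u c - 2 * u b + u a = (∫ x in a..b, u'' x * (x - a)) + ∫ x in b..c, u'' x * (c - x) := by
    rw [hL, hR]
    linear_combination (u' b) * hc
  rw [hwR, hc] at hRcs
  rw [hwL] at hLcs
  rw [hD]
  linarith [add_sq_le (a := ∫ x in a..b, u'' x * (x - a)) (b := ∫ x in b..c, u'' x * (c - x))]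

theorem MeasureTheory.Integrable.hasSum_intervalIntegral_mul {E : Type*} [NormedAddCommGroup E]
    [NormedSpace ℝ E] {f : ℝ → E} (hf : Integrable f) {h : ℝ} (hh : 0 < h) :
    HasSum (fun j : ℤ => ∫ x in j * h..(j + 1) * h, f x) (∫ x, f x) := by
  have hcell : ∀ j : ℤ, ∫ x in j * h..(j + 1) * h, f x = ∫ x in Ioc (j • h) ((j + 1) • h), f x :=
    fun j => by
      rw [intervalIntegral.integral_of_le (by nlinarith), zsmul_eq_mul, zsmul_eq_mul]
      push_cast
      rfl
  simp_rw [hcell]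
  rw [← setIntegral_univ, ← iUnion_Ioc_zsmul hh]
  exact hasSum_integral_iUnion (fun _ => measurableSet_Ioc) (pairwise_disjoint_Ioc_zsmul h)
    (by rw [iUnion_Ioc_zsmul hh]; exact hf.integrableOn)

theorem hasSum_comp_sub_one_add_of_nonneg {L R : ℤ → ℝ} {s : ℝ} (hL : ∀ j, 0 ≤ L j)
    (hR : ∀ j, 0 ≤ R j) (h : HasSum (fun j => L j + R j) s) :
    HasSum (fun j => L (j - 1) + R j) s := by
  have hLs : Summable L := h.summable.of_nonneg_of_le hL fun j => le_add_of_nonneg_right (hR j)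
  have hRs : Summable R := h.summable.of_nonneg_of_le hR fun j => le_add_of_nonneg_left (hL j)
  have hL1 : HasSum (fun j => L (j - 1)) (∑' j, L j) :=
    (Equiv.subRight (1 : ℤ)).hasSum_iff.2 hLs.hasSum
  rw [← (hLs.hasSum.add hRs.hasSum).unique h]
  exact hL1.add hRs.hasSum

theorem intervalIntegral_mul_sub_add_mul_sub {g : ℝ → ℝ} {p q : ℝ}
    (hg : IntervalIntegrable g volume p q) :
    (∫ x in p..q, g x * (x - p)) + ∫ x in p..q, g x * (q - x) = (q - p) * ∫ x in p..q, g x := by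
  rw [← intervalIntegral.integral_add (hg.mul_continuousOn (by fun_prop))
    (hg.mul_continuousOn (by fun_prop)), ← intervalIntegral.integral_const_mul]
  congr 1 with x
  ring

-- The `j`-th summand is `∫ g (h - |x - j h|)⁺`, and these hat functions add up to `h`.
theorem MeasureTheory.Integrable.hasSum_integral_mul_hat {g : ℝ → ℝ} (hg : Integrable g)
    (hg0 : ∀ x, 0 ≤ g x) {h : ℝ} (hh : 0 < h) :
    HasSum (fun j : ℤ => (∫ x in (j - 1) * h..j * h, g x * (x - (j - 1) * h))
      + ∫ x in j * h..(j + 1) * h, g x * ((j + 1) * h - x)) (h * ∫ x, g x) := by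
  have hcell : ∀ j : ℤ, (j : ℝ) * h ≤ (j + 1) * h := fun j => by nlinarith
  set L : ℤ → ℝ := fun j => ∫ x in j * h..(j + 1) * h, g x * (x - j * h)
  set R : ℤ → ℝ := fun j => ∫ x in j * h..(j + 1) * h, g x * ((j + 1) * h - x)
  have hL : ∀ j, 0 ≤ L j := fun j => intervalIntegral.integral_nonneg (hcell j)
    fun x hx => mul_nonneg (hg0 x) (sub_nonneg.2 hx.1)
  have hR : ∀ j, 0 ≤ R j := fun j => intervalIntegral.integral_nonneg (hcell j)
    fun x hx => mul_nonneg (hg0 x) (sub_nonneg.2 hx.2)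
  have hLR : HasSum (fun j => L j + R j) (h * ∫ x, g x) := by
    refine ((hg.hasSum_intervalIntegral_mul hh).mul_left h).congr_fun fun j => ?_
    rw [intervalIntegral_mul_sub_add_mul_sub hg.intervalIntegrable]
    ring
  convert hasSum_comp_sub_one_add_of_nonneg hL hR hLR using 3 with j
  simp only [L]
  push_cast
  rw [sub_add_cancel]

theorem stmt_14_general (Δx : ℝ) (hΔx : 0 < Δx) (u u' u'' : ℝ → ℝ)
    (hu' : ∀ x, HasDerivAt u (u' x) x) (hu'' : ∀ x, HasDerivAt u' (u'' x) x)
    (hu''2 : MemLp u'' 2 volume) :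
    Δx * ∑' j : ℤ, ((u ((j + 1) * Δx) - 2 * u (j * Δx) + u ((j - 1) * Δx)) / Δx ^ 2) ^ 2
      ≤ ∫ x : ℝ, (u'' x) ^ 2 := by
  have hg : Integrable (fun x => u'' x ^ 2) := hu''2.integrable_sq
  have hint (a c : ℝ) : IntervalIntegrable u'' volume a c :=
    ((hu''2.locallyIntegrable one_le_two).integrableOn_isCompact isCompact_uIcc).intervalIntegrable
  have hsum := (hg.hasSum_integral_mul_hat (fun x => sq_nonneg _) hΔx).div_const (Δx ^ 2)
  have hbound (j : ℤ) : ((u ((j + 1) * Δx) - 2 * u (j * Δx) + u ((j - 1) * Δx)) / Δx ^ 2) ^ 2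
      ≤ ((∫ x in (j - 1) * Δx..j * Δx, u'' x ^ 2 * (x - (j - 1) * Δx))
        + ∫ x in j * Δx..(j + 1) * Δx, u'' x ^ 2 * ((j + 1) * Δx - x)) / Δx ^ 2 := by
    have := sq_second_difference_le (a := (j - 1) * Δx) (b := j * Δx) (c := (j + 1) * Δx)
      (by nlinarith) (by ring) (fun x _ => hu' x) (fun x _ => hu'' x) (hint _ _)
      hg.intervalIntegrable
    rw [show (j : ℝ) * Δx - (j - 1) * Δx = Δx by ring] at this
    rw [div_pow, div_le_div_iff₀ (by positivity) (by positivity)]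
    linarith [mul_le_mul_of_nonneg_right this (sq_nonneg Δx)]
  have hterms := Summable.of_nonneg_of_le (fun j => sq_nonneg _) hbound hsum.summable
  calc _ ≤ Δx * ((Δx * ∫ x, u'' x ^ 2) / Δx ^ 2) := by
        gcongr
        exact hasSum_le hbound hterms.hasSum hsum
    _ = ∫ x, u'' x ^ 2 := by field_simp

theorem stmt_14 (Δx : ℝ) (hΔx : 0 < Δx) (u u' u'' : ℝ → ℝ)
    (hu' : ∀ x, HasDerivAt u (u' x) x) (hu'' : ∀ x, HasDerivAt u' (u'' x) x)
    (hu2 : MemLp u 2 volume) (hu'2 : MemLp u' 2 volume) (hu''2 : MemLp u'' 2 volume) :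
    Δx * ∑' j : ℤ, ((u ((j + 1) * Δx) - 2 * u (j * Δx) + u ((j - 1) * Δx)) / Δx ^ 2) ^ 2
      ≤ ∫ x : ℝ, (u'' x) ^ 2 :=
  stmt_14_general Δx hΔx u u' u'' hu' hu'' hu''2
end

section
/- If φ ∈ C₀³(ℝ) and h_Δx is the piecewise constant function equal to the discrete Hilbert transform ℍ(φ)(x_j) on each cell [x_j, x_{j+1}), then h_Δx converges to the continuous Hilbert transform H(φ) in L²(ℝ) as Δx → 0. -/
open MeasureTheory Filter

/-- Piecewise-constant interpolation of the discrete Hilbert transform of the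
grid values of φ: h_Δx(x) = ℍ(φ)_j for x ∈ [x_j, x_{j+1}), x_j = jΔx. -/
noncomputable def hDx (Δx : ℝ) (φ : ℝ → ℝ) (x : ℝ) : ℝ :=
  Hdisc (fun j : ℤ => φ (j * Δx)) ⌊x / Δx⌋

/-!
Write `a = ⌊x / Δx⌋ Δx` and `q(a, y) = (φ (a - y) - φ (a + y)) / y`. In the sum defining `ℍ`
only odd offsets survive, and pairing `±(2m+1)` gives `h_Δx(x) = π⁻¹ ∑ₘ 2Δx q(a, (2m+1)Δx)`:
a midpoint rule, with cells of width `2Δx`, for `π⁻¹ ∫₀^∞ q(x, y) dy = Hφ(x)`. Since `φ'` is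
Lipschitz, so is `q` (in both variables), and `|a - x| ≤ Δx`, the error is `O(Δx)`: this gives
pointwise convergence.

For domination, let `φ` vanish outside `[-R, R]`. On the support of `q(a, ·)` we have
`|a| ≤ R + y`, while `|q| ≤ 2 sup |φ'|` and `y |q| ≤ 2 sup |φ|`; hence `(1 + |a|) |q(a, y)|` is
bounded. Only `O(R / Δx)` cells meet that support, so `|h_Δx(x)| ≤ C / (1 + |x|)` uniformly in
`Δx ≤ 1`, and dominated convergence applies to `(Hφ - h_Δx)²`.
-/

open Real Set Topology
open scoped NNReal

theorem abs_sum_mul_sub_integral_le {v : ℕ → ℝ} {g : ℝ → ℝ} {w δ : ℝ} (hw : 0 ≤ w)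
    (hg : Continuous g) (N : ℕ)
    (hvg : ∀ m < N, ∀ y ∈ uIoc (m * w) ((m + 1) * w), |v m - g y| ≤ δ) :
    |∑ m ∈ Finset.range N, w * v m - ∫ y in (0 : ℝ)..N * w, g y| ≤ N * w * δ := by
  have hsplit : ∫ y in (0 : ℝ)..N * w, g y
      = ∑ m ∈ Finset.range N, ∫ y in m * w..(m + 1) * w, g y := by
    simpa using (intervalIntegral.sum_integral_adjacent_intervals (a := fun k : ℕ => k * w)
      fun k _ => hg.intervalIntegrable _ _).symm
  have hcell : ∀ m < N, |w * v m - ∫ y in m * w..(m + 1) * w, g y| ≤ w * δ := by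
    intro m hm
    have hconst : w * v m = ∫ _ in m * w..(m + 1) * w, v m := by
      rw [intervalIntegral.integral_const, smul_eq_mul]; ring
    rw [hconst, ← intervalIntegral.integral_sub intervalIntegrable_const
      (hg.intervalIntegrable _ _)]
    have := intervalIntegral.norm_integral_le_of_norm_le_const (f := fun y => v m - g y)
      (hvg m hm)
    rw [Real.norm_eq_abs, show (m + 1) * w - m * w = w by ring, abs_of_nonneg hw] at this
    linarith
  rw [hsplit, ← Finset.sum_sub_distrib]
  calc _ ≤ ∑ m ∈ Finset.range N, |w * v m - ∫ y in m * w..(m + 1) * w, g y| :=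
        Finset.abs_sum_le_sum_abs _ _
    _ ≤ ∑ m ∈ Finset.range N, w * δ :=
        Finset.sum_le_sum fun m hm => hcell m (Finset.mem_range.1 hm)
    _ = N * w * δ := by rw [Finset.sum_const, Finset.card_range, nsmul_eq_mul]; ring

theorem card_mul_le_of_forall_mem_Icc {s : Finset ℕ} {w A D : ℝ} (hw : 0 ≤ w) (hD : 0 ≤ D)
    (hs : ∀ m ∈ s, (m : ℝ) * w ∈ Icc A (A + D)) : s.card * w ≤ D + w := by
  rcases s.eq_empty_or_nonempty with rfl | hne
  · simpa using add_nonneg hD hw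
  set m₀ := s.min' hne
  set m₁ := s.max' hne
  have hsub : s ⊆ Finset.Icc m₀ m₁ := fun m hm =>
    Finset.mem_Icc.2 ⟨s.min'_le m hm, s.le_max' m hm⟩
  have hcard : (s.card : ℝ) ≤ m₁ - m₀ + 1 := by
    have h₁ := Finset.card_le_card hsub
    have h₂ : m₀ ≤ m₁ := s.min'_le _ (s.max'_mem hne)
    rw [Nat.card_Icc] at h₁
    have : ((m₁ + 1 - m₀ : ℕ) : ℝ) = m₁ - m₀ + 1 := by
      rw [Nat.cast_sub (by omega)]; push_cast; ring
    rw [← this]; exact_mod_cast h₁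
  have hspread : ((m₁ : ℝ) - m₀) * w ≤ D := by
    have := hs _ (s.max'_mem hne); have := hs _ (s.min'_mem hne)
    simp only [mem_Icc] at *; nlinarith
  nlinarith

theorem abs_sum_mul_le_of_forall_mem_Icc {v : ℕ → ℝ} {w A C D : ℝ} (hw : 0 ≤ w) (hD : 0 ≤ D)
    (hC : ∀ m, |v m| ≤ C) (hv : ∀ m, v m ≠ 0 → (m : ℝ) * w ∈ Icc A (A + D)) (t : Finset ℕ) :
    |∑ m ∈ t, w * v m| ≤ C * (D + w) := by
  classical
  set s := t.filter (fun m => v m ≠ 0)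
  have hC0 : 0 ≤ C := (abs_nonneg _).trans (hC 0)
  calc |∑ m ∈ t, w * v m| = |∑ m ∈ s, w * v m| := by
        rw [Finset.sum_filter_of_ne fun m _ h => right_ne_zero_of_mul h]
    _ ≤ ∑ m ∈ s, w * C := by
        refine (Finset.abs_sum_le_sum_abs _ _).trans (Finset.sum_le_sum fun m _ => ?_)
        rw [abs_mul, abs_of_nonneg hw]; exact mul_le_mul_of_nonneg_left (hC m) hw
    _ = s.card * w * C := by rw [Finset.sum_const, nsmul_eq_mul]; ring
    _ ≤ C * (D + w) := by
        have := card_mul_le_of_forall_mem_Icc (s := s) hw hD fun m hm =>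
          hv m (Finset.mem_filter.1 hm).2
        nlinarith

theorem integral_Ioi_eq_intervalIntegral {g : ℝ → ℝ} {T : ℝ} (hT : 0 ≤ T)
    (hg : ∀ y, T < y → g y = 0) : ∫ y in Ioi 0, g y = ∫ y in (0 : ℝ)..T, g y := by
  rw [intervalIntegral.integral_of_le hT]
  refine setIntegral_eq_of_subset_of_forall_sdiff_eq_zero measurableSet_Ioi Ioc_subset_Ioi_self
    fun y hy => hg y ?_
  simp only [Set.mem_sdiff, mem_Ioi, mem_Ioc, not_and, not_le] at hy
  exact hy.2 hy.1

theorem abs_floor_div_mul_sub_le (x : ℝ) {h : ℝ} (hh : 0 < h) : |⌊x / h⌋ * h - x| ≤ h := by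
  rw [abs_sub_comm, abs_of_nonneg (Int.sub_floor_div_mul_nonneg x hh)]
  exact (Int.sub_floor_div_mul_lt x hh).le

theorem tendsto_integral_sub_sq_of_dominated {α ι : Type*} [MeasurableSpace α] {μ : Measure α}
    {l : Filter ι} [l.NeBot] [l.IsCountablyGenerated] {f : ι → α → ℝ} {F G : α → ℝ}
    (hf : ∀ i, AEStronglyMeasurable (f i) μ) (hG : Integrable (fun x => G x ^ 2) μ)
    (hfG : ∀ᶠ i in l, ∀ x, |f i x| ≤ G x) (hlim : ∀ x, Tendsto (fun i => f i x) l (𝓝 (F x))) :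
    Tendsto (fun i => ∫ x, (F x - f i x) ^ 2 ∂μ) l (𝓝 0) := by
  have hF : AEStronglyMeasurable F μ :=
    aestronglyMeasurable_of_tendsto_ae l hf (ae_of_all _ hlim)
  have hFG : ∀ x, |F x| ≤ G x := fun x =>
    le_of_tendsto (hlim x).abs (hfG.mono fun i hi => hi x)
  have hdom := tendsto_integral_filter_of_dominated_convergence
    (F := fun i x => (F x - f i x) ^ 2) (f := fun _ => 0) (fun x => 4 * G x ^ 2)
    (Eventually.of_forall fun i => (hF.sub (hf i)).pow 2)
    (hfG.mono fun i hi => ae_of_all _ fun x => by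
      rw [Real.norm_eq_abs, abs_sq, ← sq_abs]
      nlinarith [abs_sub (F x) (f i x), hi x, hFG x, abs_nonneg (F x - f i x)])
    (hG.const_mul 4)
    (ae_of_all _ fun x => by simpa using ((hlim x).const_sub (F x)).pow 2)
  rwa [integral_zero] at hdom

theorem integrable_sq_div_one_add_abs (C : ℝ) :
    Integrable (fun x : ℝ => (C / (1 + |x|)) ^ 2) := by
  refine (integrable_inv_one_add_sq.const_mul (C ^ 2)).mono'
    ((continuous_const.div (by fun_prop) fun x => by positivity).pow 2).aestronglyMeasurable
    (ae_of_all _ fun x => ?_)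
  rw [Real.norm_eq_abs, abs_sq, div_pow, div_eq_mul_inv]
  gcongr
  nlinarith [abs_nonneg x, sq_abs x]

theorem Hdisc_eq_tsum_odd {u : ℤ → ℝ} (hu : u.support.Finite) (j : ℤ) :
    Hdisc u j = 1 / π * ∑' m : ℕ,
      2 * ((u (j - (2 * m + 1)) - u (j + (2 * m + 1))) / (2 * m + 1)) := by
  set F : ℤ → ℝ := fun n => u (j - n) * (1 - (-1) ^ n) / n
  set S := ∑' n, F n
  -- at `k = j` the general term is `u j * 0 / 0 = 0` anyway
  have hterm : ∀ k, (if k = j then 0 else u k * (1 - (-1 : ℝ) ^ (j - k)) / ((j : ℝ) - k))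
      = F (j - k) := by
    intro k
    split_ifs with hk
    · simp [F, hk]
    · simp [F]
  have hF : HasSum F S := by
    refine (summable_of_hasFiniteSupport ?_).hasSum
    refine (hu.image (j - ·)).subset fun n hn => ⟨j - n, ?_, by simp⟩
    exact fun h0 => hn (by simp [F, h0])
  have hsym : HasSum (fun n : ℕ => F n + F (-n)) S := by
    simpa [F] using hF.nat_add_neg
  have heven : ∀ n : ℕ, n ∉ range (fun m : ℕ => 2 * m + 1) → F n + F (-n) = 0 := by
    intro n hn
    have he : Even (n : ℤ) := by
      rcases Nat.even_or_odd n with h | ⟨m, rfl⟩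
      · exact_mod_cast h
      · exact absurd ⟨m, rfl⟩ hn
    simp [F, he.neg_one_zpow, he.neg.neg_one_zpow]
  have hodd : HasSum (fun m : ℕ => 2 * ((u (j - (2 * m + 1)) - u (j + (2 * m + 1)))
      / (2 * m + 1))) S := by
    refine ((Function.Injective.hasSum_iff (fun a b hab => by simpa using hab) heven).2
      hsym).congr_fun fun m => ?_
    have ho : Odd (2 * (m : ℤ) + 1) := odd_two_mul_add_one _
    simp only [Function.comp_apply, F, Nat.cast_add, Nat.cast_mul, Nat.cast_ofNat, Nat.cast_one,
      ho.neg_one_zpow, ho.neg.neg_one_zpow, sub_neg_eq_add, Int.cast_neg]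
    push_cast [div_neg]
    ring
  rw [Hdisc, tsum_congr hterm, show ∑' k, F (j - k) = S from (Equiv.subLeft j).tsum_eq F,
    ← hodd.tsum_eq]

/-- Equal to `(φ (a - y) - φ (a + y)) / y` for `y ≠ 0` (`symmQuot_eq_div`); written as an integral
of `φ'` so that it stays continuous, and Lipschitz when `φ'` is, across `y = 0`. -/
noncomputable def symmQuot (φ : ℝ → ℝ) (a y : ℝ) : ℝ :=
  -∫ s in (-1 : ℝ)..1, deriv φ (a + s * y)

section symmQuot

variable {φ : ℝ → ℝ} {R a y : ℝ}

theorem symmQuot_eq_div (hφ : ContDiff ℝ 1 φ) (hy : y ≠ 0) :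
    symmQuot φ a y = (φ (a - y) - φ (a + y)) / y := by
  have hderiv : ∀ s ∈ uIcc (-1 : ℝ) 1,
      HasDerivAt (fun s => φ (a + s * y)) (deriv φ (a + s * y) * y) s := fun s _ =>
    ((hφ.differentiable one_ne_zero _).hasDerivAt.comp s
      ((hasDerivAt_mul_const y).const_add a))
  have hint : IntervalIntegrable (fun s => deriv φ (a + s * y) * y) volume (-1) 1 :=
    ((hφ.continuous_deriv le_rfl).comp (by fun_prop)).mul continuous_const
      |>.intervalIntegrable _ _
  have hftc := intervalIntegral.integral_eq_sub_of_hasDerivAt hderiv hint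
  rw [intervalIntegral.integral_mul_const] at hftc
  rw [symmQuot, eq_div_iff hy]
  simp only [one_mul, neg_one_mul, ← sub_eq_add_neg] at hftc
  linarith

theorem continuous_symmQuot (hφ : ContDiff ℝ 1 φ) (a : ℝ) : Continuous (symmQuot φ a) := by
  have := hφ.continuous_deriv le_rfl
  exact (intervalIntegral.continuous_parametric_intervalIntegral_of_continuous'
    (by fun_prop) _ _).neg

theorem abs_symmQuot_sub_le {K : ℝ≥0} (hK : LipschitzWith K (deriv φ)) (a a' y y' : ℝ) :
    |symmQuot φ a y - symmQuot φ a' y'| ≤ 2 * K * (|a - a'| + |y - y'|) := by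
  have hc : ∀ b z, IntervalIntegrable (fun s => deriv φ (b + s * z)) volume (-1) 1 :=
    fun b z => (hK.continuous.comp (by fun_prop)).intervalIntegrable _ _
  rw [symmQuot, symmQuot, neg_sub_neg, ← intervalIntegral.integral_sub (hc _ _) (hc _ _)]
  have hb : ∀ s ∈ uIoc (-1 : ℝ) 1,
      ‖deriv φ (a' + s * y') - deriv φ (a + s * y)‖ ≤ K * (|a - a'| + |y - y'|) := by
    intro s hs
    rw [uIoc_of_le (by norm_num : (-1 : ℝ) ≤ 1)] at hs
    have hs1 : |s| ≤ 1 := abs_le.2 ⟨hs.1.le, hs.2⟩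
    calc ‖deriv φ (a' + s * y') - deriv φ (a + s * y)‖
        ≤ K * |(a' + s * y') - (a + s * y)| := hK.dist_le_mul _ _
      _ ≤ K * (|a - a'| + |y - y'|) := by
        gcongr
        calc |(a' + s * y') - (a + s * y)| = |(a' - a) + s * (y' - y)| := by ring_nf
          _ ≤ |a' - a| + |s| * |y' - y| := by rw [← abs_mul]; exact abs_add_le _ _
          _ ≤ |a - a'| + |y - y'| := by
            rw [abs_sub_comm a', abs_sub_comm y']
            nlinarith [abs_nonneg (y - y')]
  have := intervalIntegral.norm_integral_le_of_norm_le_const hb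
  rw [Real.norm_eq_abs] at this
  norm_num at this
  linarith

theorem abs_symmQuot_le {L : ℝ} (hL : ∀ z, |deriv φ z| ≤ L) (a y : ℝ) :
    |symmQuot φ a y| ≤ 2 * L := by
  have := intervalIntegral.norm_integral_le_of_norm_le_const (a := -1) (b := 1)
    (f := fun s => deriv φ (a + s * y)) fun s _ => hL _
  rw [symmQuot, abs_neg]
  norm_num at this
  linarith

theorem abs_abs_sub_abs_lt_of_symmQuot_ne_zero (hφ : ContDiff ℝ 1 φ)
    (hR : ∀ z, R ≤ |z| → φ z = 0) (hy : y ≠ 0) (h : symmQuot φ a y ≠ 0) :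
    |(|a| - |y|)| < R := by
  rw [symmQuot_eq_div hφ hy] at h
  by_contra! hle
  have h₁ : φ (a - y) = 0 := hR _ (hle.trans (abs_abs_sub_abs_le_abs_sub a y))
  have h₂ : φ (a + y) = 0 := hR _ (hle.trans (by simpa using abs_abs_sub_abs_le_abs_sub a (-y)))
  simp [h₁, h₂] at h

theorem symmQuot_eq_zero_of_le (hφ : ContDiff ℝ 1 φ) (hR : ∀ z, R ≤ |z| → φ z = 0)
    (hy : y ≠ 0) (h : R + |a| ≤ |y|) : symmQuot φ a y = 0 := by
  by_contra hne
  have := abs_abs_sub_abs_lt_of_symmQuot_ne_zero hφ hR hy hne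
  linarith [neg_abs_le (|a| - |y|)]

theorem hasCompactSupport_symmQuot (hφ : ContDiff ℝ 1 φ) (hR : ∀ z, R ≤ |z| → φ z = 0)
    (a : ℝ) : HasCompactSupport (symmQuot φ a) := by
  refine HasCompactSupport.intro (isCompact_closedBall 0 (max R 0 + |a|)) fun y hy => ?_
  rw [Metric.mem_closedBall, dist_zero_right, Real.norm_eq_abs, not_le] at hy
  refine symmQuot_eq_zero_of_le hφ hR ?_ (by linarith [le_max_left R 0])
  rintro rfl
  rw [abs_zero] at hy
  linarith [le_max_right R 0, abs_nonneg a]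

theorem one_add_abs_mul_abs_symmQuot_le {B L : ℝ} (hφ : ContDiff ℝ 1 φ) (hR0 : 0 ≤ R)
    (hR : ∀ z, R ≤ |z| → φ z = 0) (hB : ∀ z, |φ z| ≤ B) (hL : ∀ z, |deriv φ z| ≤ L)
    (hy : y ≠ 0) : (1 + |a|) * |symmQuot φ a y| ≤ 2 * ((1 + R) * L + B) := by
  have hQ := abs_symmQuot_le hL a y
  by_cases h : symmQuot φ a y = 0
  · rw [h, abs_zero, mul_zero]
    nlinarith [(abs_nonneg _).trans (hB 0), (abs_nonneg _).trans (hL 0)]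
  have ha : |a| < R + |y| := by
    linarith [le_abs_self (|a| - |y|), abs_abs_sub_abs_lt_of_symmQuot_ne_zero hφ hR hy h]
  have hyQ : |y| * |symmQuot φ a y| ≤ 2 * B := by
    rw [symmQuot_eq_div hφ hy, abs_div, mul_div_cancel₀ _ (abs_ne_zero.2 hy)]
    linarith [abs_sub (φ (a - y)) (φ (a + y)), hB (a - y), hB (a + y)]
  nlinarith [abs_nonneg (symmQuot φ a y)]

theorem eq_integral_symmQuot_of_tendsto {c x : ℝ} (hφ : ContDiff ℝ 1 φ)
    (hR : ∀ z, R ≤ |z| → φ z = 0)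
    (hc : Tendsto (fun ε => 1 / π * ∫ y in Ioi ε, (φ (x - y) - φ (x + y)) / y)
      (𝓝[>] 0) (𝓝 c)) :
    c = 1 / π * ∫ y in Ioi 0, symmQuot φ x y := by
  have hint : IntegrableOn (symmQuot φ x) (Ioi 0) :=
    ((continuous_symmQuot hφ x).integrable_of_hasCompactSupport
      (hasCompactSupport_symmQuot hφ hR x)).integrableOn
  refine tendsto_nhds_unique hc (Tendsto.congr' ?_
    ((hint.continuousWithinAt_Ici_primitive_Ioi.mono Ioi_subset_Ici_self).tendsto.const_mul _))
  filter_upwards [self_mem_nhdsWithin] with ε (hε : 0 < ε)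
  congr 1
  exact setIntegral_congr_fun measurableSet_Ioi fun y hy =>
    symmQuot_eq_div hφ (hε.trans hy).ne'

end symmQuot

theorem measurable_hDx (h : ℝ) (φ : ℝ → ℝ) : Measurable (hDx h φ) :=
  (measurable_of_countable _).comp (Int.measurable_floor.comp (measurable_id.div_const h))

section hDx

variable {φ : ℝ → ℝ} {R h : ℝ}

theorem finite_support_comp_intCast_mul (hR : ∀ z, R ≤ |z| → φ z = 0) (hh : 0 < h) :
    (fun k : ℤ => φ (k * h)).support.Finite := by
  refine (Set.finite_Icc (-⌈R / h⌉) ⌈R / h⌉).subset fun k hk => ?_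
  have hkh : |(k : ℝ) * h| < R := not_le.1 fun hle => hk (hR _ hle)
  rw [abs_mul, abs_of_pos hh] at hkh
  have : ((|k| : ℤ) : ℝ) ≤ ⌈R / h⌉ := by
    rw [Int.cast_abs]; exact ((lt_div_iff₀ hh).2 hkh).le.trans (Int.le_ceil _)
  exact abs_le.1 (by exact_mod_cast this)

theorem hDx_eq_sum_symmQuot (hφ : ContDiff ℝ 1 φ) (hR : ∀ z, R ≤ |z| → φ z = 0)
    (hh : 0 < h) (x : ℝ) {N : ℕ} (hN : R + |⌊x / h⌋ * h| ≤ 2 * N * h) :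
    hDx h φ x =
      1 / π * ∑ m ∈ Finset.range N, 2 * h * symmQuot φ (⌊x / h⌋ * h) ((2 * m + 1) * h) := by
  have hpos : ∀ m : ℕ, 0 < (2 * m + 1) * h := fun m => by positivity
  rw [hDx, Hdisc_eq_tsum_odd (finite_support_comp_intCast_mul hR hh)]
  congr 1
  calc _ = ∑' m : ℕ, 2 * h * symmQuot φ (⌊x / h⌋ * h) ((2 * m + 1) * h) := by
        refine tsum_congr fun m => ?_
        rw [symmQuot_eq_div hφ (hpos m).ne']
        push_cast
        field_simp
    _ = _ := tsum_eq_sum fun m hm => by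
        refine mul_eq_zero_of_right _ (symmQuot_eq_zero_of_le hφ hR (hpos m).ne' ?_)
        rw [abs_of_pos (hpos m)]
        have : (N : ℝ) ≤ m := by exact_mod_cast not_lt.1 (Finset.mem_range.not.1 hm)
        nlinarith

theorem abs_hDx_sub_integral_le {K : ℝ≥0} (hφ : ContDiff ℝ 1 φ)
    (hK : LipschitzWith K (deriv φ)) (hR0 : 0 ≤ R) (hR : ∀ z, R ≤ |z| → φ z = 0) (x : ℝ)
    (hh : 0 < h) (hh1 : h ≤ 1) :
    |hDx h φ x - 1 / π * ∫ y in Ioi 0, symmQuot φ x y| ≤ 4 * K * (R + |x| + 3) * h := by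
  set a : ℝ := ⌊x / h⌋ * h
  have hax : |a - x| ≤ h := abs_floor_div_mul_sub_le x hh
  set N := ⌈(R + |x| + 1) / (2 * h)⌉₊
  have hN : R + |x| + 1 ≤ N * (2 * h) := (div_le_iff₀ (by positivity)).1 (Nat.le_ceil _)
  have hN' : N * (2 * h) ≤ R + |x| + 3 := by
    have := mul_lt_mul_of_pos_right (Nat.ceil_lt_add_one (show 0 ≤ (R + |x| + 1) / (2 * h) by
      positivity)) (by positivity : 0 < 2 * h)
    rw [add_mul, div_mul_cancel₀ _ (by positivity)] at this
    linarith
  have ha : R + |a| ≤ 2 * N * h := by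
    linarith [abs_sub_abs_le_abs_sub a x]
  have hsum := abs_sum_mul_sub_integral_le (v := fun m => symmQuot φ a ((2 * m + 1) * h))
    (w := 2 * h) (δ := 4 * K * h) (by positivity) (continuous_symmQuot hφ x) N
    fun m _ y hy => by
      rw [uIoc_of_le (by nlinarith), mem_Ioc] at hy
      have := abs_symmQuot_sub_le hK a x ((2 * m + 1) * h) y
      have : |(2 * m + 1) * h - y| ≤ h := abs_le.2 ⟨by linarith, by linarith⟩
      nlinarith
  have hint : ∫ y in Ioi 0, symmQuot φ x y = ∫ y in (0 : ℝ)..N * (2 * h), symmQuot φ x y :=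
    integral_Ioi_eq_intervalIntegral (by positivity) fun y hy => by
      have hy0 : 0 < y := (by positivity : (0 : ℝ) ≤ N * (2 * h)).trans_lt hy
      exact symmQuot_eq_zero_of_le hφ hR hy0.ne' (by rw [abs_of_pos hy0]; linarith)
  have hπ : 1 / π ≤ 1 := (div_le_one pi_pos).2 (by linarith [pi_gt_three])
  rw [hDx_eq_sum_symmQuot hφ hR hh x ha, hint, ← mul_sub, abs_mul,
    abs_of_pos (by positivity : 0 < 1 / π)]
  calc _ ≤ 1 * (N * (2 * h) * (4 * K * h)) := mul_le_mul hπ hsum (abs_nonneg _) zero_le_one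
    _ ≤ 4 * K * (R + |x| + 3) * h := by
      rw [one_mul]
      have : (0 : ℝ) ≤ 4 * K * h := by positivity
      nlinarith

theorem one_add_abs_mul_abs_hDx_le {B L : ℝ} (hφ : ContDiff ℝ 1 φ) (hR0 : 0 ≤ R)
    (hR : ∀ z, R ≤ |z| → φ z = 0) (hB : ∀ z, |φ z| ≤ B) (hL : ∀ z, |deriv φ z| ≤ L)
    (hh : 0 < h) (hh1 : h ≤ 1) (x : ℝ) :
    (1 + |x|) * |hDx h φ x| ≤ 8 * (R + 1) * ((1 + R) * L + B) := by
  set a : ℝ := ⌊x / h⌋ * h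
  have hax : |a - x| ≤ h := abs_floor_div_mul_sub_le x hh
  have hE : 0 ≤ (1 + R) * L + B := by
    have := (abs_nonneg _).trans (hB 0); have := (abs_nonneg _).trans (hL 0); positivity
  set C := 2 * ((1 + R) * L + B) / (1 + |a|)
  have hQ : ∀ m : ℕ, |symmQuot φ a ((2 * m + 1) * h)| ≤ C := fun m => by
    rw [le_div_iff₀ (by positivity), mul_comm]
    exact one_add_abs_mul_abs_symmQuot_le hφ hR0 hR hB hL (by positivity)
  have hwindow : ∀ m : ℕ, symmQuot φ a ((2 * m + 1) * h) ≠ 0 →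
      (m : ℝ) * (2 * h) ∈ Icc (|a| - R - h) (|a| - R - h + 2 * R) := fun m hm => by
    have := abs_abs_sub_abs_lt_of_symmQuot_ne_zero hφ hR (by positivity) hm
    rw [abs_of_pos (by positivity : 0 < (2 * (m : ℝ) + 1) * h), abs_lt] at this
    constructor <;> nlinarith
  set N := ⌈(R + |a|) / (2 * h)⌉₊
  have hN : R + |a| ≤ 2 * N * h := by
    have := (div_le_iff₀ (by positivity)).1 (Nat.le_ceil ((R + |a|) / (2 * h)))
    linarith
  have hsum := abs_sum_mul_le_of_forall_mem_Icc (w := 2 * h) (by positivity)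
    (by positivity : 0 ≤ 2 * R) hQ hwindow (Finset.range N)
  have hπ : 1 / π ≤ 1 := (div_le_one pi_pos).2 (by linarith [pi_gt_three])
  have hxa : 1 + |x| ≤ 2 * (1 + |a|) := by
    have := abs_sub_abs_le_abs_sub x a
    rw [abs_sub_comm] at this
    linarith [abs_nonneg a]
  have hCa : (1 + |a|) * C = 2 * ((1 + R) * L + B) := mul_div_cancel₀ _ (by positivity)
  rw [hDx_eq_sum_symmQuot hφ hR hh x hN, abs_mul, abs_of_pos (by positivity : 0 < 1 / π)]
  calc (1 + |x|) * (1 / π * |∑ m ∈ Finset.range N, 2 * h * symmQuot φ a ((2 * m + 1) * h)|)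
      ≤ (2 * (1 + |a|)) * (1 * (C * (2 * R + 2 * h))) := by
        gcongr
    _ = 8 * (R + h) * ((1 + R) * L + B) := by linear_combination 4 * (R + h) * hCa
    _ ≤ 8 * (R + 1) * ((1 + R) * L + B) := by gcongr

theorem tendsto_hDx_nhdsGT {K : ℝ≥0} (hφ : ContDiff ℝ 1 φ) (hK : LipschitzWith K (deriv φ))
    (hR0 : 0 ≤ R) (hR : ∀ z, R ≤ |z| → φ z = 0) (x : ℝ) :
    Tendsto (fun h => hDx h φ x) (𝓝[>] 0) (𝓝 (1 / π * ∫ y in Ioi 0, symmQuot φ x y)) := by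
  rw [tendsto_iff_norm_sub_tendsto_zero]
  refine squeeze_zero' (Eventually.of_forall fun _ => norm_nonneg _) ?_
    (((continuous_const_mul (4 * K * (R + |x| + 3))).tendsto' 0 0 (mul_zero _)).mono_left
      nhdsWithin_le_nhds)
  filter_upwards [Ioc_mem_nhdsGT one_pos] with h hh
  exact abs_hDx_sub_integral_le hφ hK hR0 hR x hh.1 hh.2

end hDx

theorem stmt_15 (φ : ℝ → ℝ) (hφ : ContDiff ℝ 3 φ) (hsupp : HasCompactSupport φ)
    (Hφ : ℝ → ℝ)
    (hH : ∀ x : ℝ, Tendsto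
      (fun ε : ℝ => (1 / Real.pi) * ∫ y in Set.Ioi ε, (φ (x - y) - φ (x + y)) / y)
      (nhdsWithin 0 (Set.Ioi 0)) (nhds (Hφ x))) :
    Tendsto (fun Δx : ℝ => Real.sqrt (∫ x : ℝ, (Hφ x - hDx Δx φ x) ^ 2))
      (nhdsWithin 0 (Set.Ioi 0)) (nhds 0) := by
  have hφ1 : ContDiff ℝ 1 φ := hφ.of_le (by norm_num)
  obtain ⟨R, hR0, hR⟩ := hsupp.exists_pos_le_norm
  obtain ⟨K, hK⟩ := ContDiff.lipschitzWith_of_hasCompactSupport hsupp.deriv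
    (hφ.of_le (by norm_num) : ContDiff ℝ (1 + 1) φ).deriv' one_ne_zero
  obtain ⟨B, hB⟩ := hφ.continuous.bounded_above_of_compact_support hsupp
  obtain ⟨L, hL⟩ := (hφ1.continuous_deriv le_rfl).bounded_above_of_compact_support hsupp.deriv
  have hlim : ∀ x, Tendsto (fun h => hDx h φ x) (𝓝[>] 0) (𝓝 (Hφ x)) := fun x => by
    rw [eq_integral_symmQuot_of_tendsto hφ1 hR (hH x)]
    exact tendsto_hDx_nhdsGT hφ1 hK hR0.le hR x
  have hdom : ∀ᶠ h in 𝓝[>] 0, ∀ x,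
      |hDx h φ x| ≤ 8 * (R + 1) * ((1 + R) * L + B) / (1 + |x|) := by
    filter_upwards [Ioc_mem_nhdsGT one_pos] with h hh x
    rw [le_div_iff₀ (by positivity), mul_comm]
    exact one_add_abs_mul_abs_hDx_le hφ1 hR0.le hR hB hL hh.1 hh.2 x
  simpa using (tendsto_integral_sub_sq_of_dominated
    (fun h => (measurable_hDx h φ).aestronglyMeasurable) (integrable_sq_div_one_add_abs _)
    hdom hlim).sqrt
end

section
/- For an odd natural number N, the discrete Fourier transform of the vector c_n = ((1−(−1)^n)/(2N))·cot(πn/(2N)) − ((1+(−1)^n)/(2N))·tan(πn/(2N)) (for n = 1, …, N−1, with c_0 = 0) satisfies ĉ_n = −i for n = 1, …, (N−1)/2, ĉ_0 = 0, and ĉ_n = i for n = (N+1)/2, …, N−1, where ĉ_k = Σ_{n=0}^{N−1} c_n e^{−2πikn/N}. -/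
/-!
The symbol `-i sgn` is odd, so its inverse DFT at `n` pairs the frequencies `j` and `N - j` into
`N⁻¹ ∑_{j=1}^{(N-1)/2} 2 sin (2π j n / N)`. Multiplied by `sin (π n / N)`, this conjugate
Dirichlet kernel telescopes to `cos (2a) - (-1)^n` with `a = π n / (2N)`, and so does
`N c_n sin (2a) = ((1 - (-1)^n) cot a - (1 + (-1)^n) tan a) sin a cos a`. Hence `c` is the inverse
DFT of `-i sgn`, and DFT inversion on `ZMod N` gives the claim.
-/

section
open Real

lemma sum_range_two_sin_mul_sin_half (θ : ℝ) (m : ℕ) :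
    (∑ j ∈ Finset.range m, 2 * sin ((j + 1) * θ)) * sin (θ / 2)
      = cos (θ / 2) - cos ((2 * m + 1) * θ / 2) := by
  induction m with
  | zero => simp
  | succ m ih =>
    have step := cos_sub_cos ((2 * m + 1) * θ / 2) ((2 * (m + 1) + 1) * θ / 2)
    rw [show ((2 * m + 1) * θ / 2 + (2 * (m + 1) + 1) * θ / 2) / 2 = (m + 1) * θ by ring,
      show ((2 * m + 1) * θ / 2 - (2 * (m + 1) + 1) * θ / 2) / 2 = -(θ / 2) by ring,
      sin_neg] at step
    rw [Finset.sum_range_succ, add_mul, ih]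
    push_cast
    linear_combination -step

lemma cot_tan_combination_mul_sin_two_mul {a : ℝ} (hs : sin a ≠ 0) (hc : cos a ≠ 0) (e : ℝ) :
    ((1 - e) * (cos a / sin a) - (1 + e) * tan a) * sin (2 * a) = 2 * (cos (2 * a) - e) := by
  rw [tan_eq_sin_div_cos, sin_two_mul, cos_two_mul]
  field_simp
  linear_combination -(1 + e) * sin_sq_add_cos_sq a

lemma cot_tan_coeff_eq_sum_sin {N n : ℕ} (hN : Odd N) (hn0 : 1 ≤ n) (hn : n < N) :
    (N : ℝ) * ((1 - (-1 : ℝ) ^ n) / (2 * N) * (cos (π * n / (2 * N)) / sin (π * n / (2 * N)))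
        - (1 + (-1 : ℝ) ^ n) / (2 * N) * tan (π * n / (2 * N)))
      = ∑ j ∈ Finset.range ((N - 1) / 2), 2 * sin ((j + 1) * (2 * π * n / N)) := by
  obtain ⟨m, rfl⟩ := hN
  rw [show (2 * m + 1 - 1) / 2 = m by omega]
  set a := π * n / (2 * (2 * m + 1 : ℕ)) with ha
  have ha0 : 0 < a := by positivity
  have ha1 : a < π / 2 := by
    rw [ha, div_lt_div_iff₀ (by positivity) two_pos]
    have : (n : ℝ) < (2 * m + 1 : ℕ) := by exact_mod_cast hn
    nlinarith [pi_pos]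
  have hs : sin a ≠ 0 := (sin_pos_of_pos_of_lt_pi ha0 (by linarith)).ne'
  have hc : cos a ≠ 0 := (cos_pos_of_mem_Ioo ⟨by linarith, ha1⟩).ne'
  set θ := 2 * π * n / (2 * m + 1 : ℕ) with hθ
  have hθa : θ / 2 = 2 * a := by rw [hθ, ha]; field_simp
  have hθn : (2 * m + 1) * θ / 2 = n * π := by rw [hθ]; push_cast; field_simp
  have hsin : sin (θ / 2) ≠ 0 := by rw [hθa, sin_two_mul]; positivity
  refine mul_right_cancel₀ hsin ?_
  calc _ = ((1 - (-1) ^ n) * (cos a / sin a) - (1 + (-1) ^ n) * tan a) * sin (2 * a) / 2 := by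
          rw [hθa]; field_simp
    _ = cos (θ / 2) - cos ((2 * m + 1) * θ / 2) := by
          rw [cot_tan_combination_mul_sin_two_mul hs hc, hθa, hθn, cos_nat_mul_pi]; ring
    _ = _ := (sum_range_two_sin_mul_sin_half θ m).symm

end

open Complex

lemma Finset.sum_range_two_mul_add_one {M : Type*} [AddCommMonoid M] (f : ℕ → M) (m : ℕ) :
    ∑ j ∈ range (2 * m + 1), f j = f 0 + ∑ j ∈ range m, (f (j + 1) + f (2 * m - j)) := by
  rw [sum_range_succ', two_mul, sum_range_add, sum_add_distrib,
    ← sum_range_reflect (fun j => f (m + j + 1)) m]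
  have h : ∀ j ∈ range m, f (m + (m - 1 - j) + 1) = f (m + m - j) := fun j hj => by
    rw [mem_range] at hj; congr 1; omega
  rw [sum_congr rfl h]
  abel

lemma neg_I_mul_exp_add_I_mul_exp_neg (x : ℝ) :
    -I * exp (x * I) + I * exp (-x * I) = (2 * Real.sin x : ℝ) := by
  push_cast
  rw [Complex.sin]
  ring

/-- `-i sgn j`, where the residues `j > (N - 1) / 2` stand for the negative frequencies `j - N`. -/
def hilbertMultiplier (N j : ℕ) : ℂ :=
  if j = 0 then 0 else if j ≤ (N - 1) / 2 then -I else I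

lemma sum_hilbertMultiplier_mul_exp {N : ℕ} (hN : Odd N) (n : ℕ) :
    ∑ j ∈ Finset.range N, hilbertMultiplier N j * exp (2 * Real.pi * I * j * n / N)
      = (∑ j ∈ Finset.range ((N - 1) / 2),
          2 * Real.sin ((j + 1) * (2 * Real.pi * n / N)) : ℝ) := by
  obtain ⟨m, rfl⟩ := hN
  have hm : (2 * m + 1 - 1) / 2 = m := by omega
  have hN0 : (2 * m + 1 : ℂ) ≠ 0 := by exact_mod_cast (2 * m).succ_ne_zero
  rw [Finset.sum_range_two_mul_add_one, hm, ofReal_sum]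
  simp only [hilbertMultiplier, hm, ↓reduceIte, zero_mul, zero_add]
  refine Finset.sum_congr rfl fun j hj => ?_
  rw [Finset.mem_range] at hj
  set x := (j + 1) * (2 * Real.pi * n / (2 * m + 1 : ℕ)) with hx
  have hlow : (2 * Real.pi * I * (j + 1 : ℕ) * n / (2 * m + 1 : ℕ)) = x * I := by
    rw [hx]; push_cast; ring
  have hhigh : (2 * Real.pi * I * (2 * m - j : ℕ) * n / (2 * m + 1 : ℕ))
      = n * (2 * Real.pi * I) + -x * I := by
    rw [Nat.cast_sub (by omega), hx]
    push_cast
    field_simp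
    ring
  rw [if_neg (by omega), if_pos (by omega), if_neg (by omega), if_neg (by omega), hlow, hhigh,
    exp_add, exp_nat_mul_two_pi_mul_I, one_mul, neg_I_mul_exp_add_I_mul_exp_neg]

namespace ZMod

variable {N : ℕ} [NeZero N]

lemma sum_comp_val {M : Type*} [AddCommMonoid M] (f : ℕ → M) :
    ∑ x : ZMod N, f x.val = ∑ n ∈ Finset.range N, f n :=
  Finset.sum_bij' (fun x _ => x.val) (fun n _ => (n : ZMod N))
    (fun x _ => Finset.mem_range.2 x.val_lt) (fun _ _ => Finset.mem_univ _)
    (fun x _ => natCast_zmod_val x) (fun _ hn => val_natCast_of_lt (Finset.mem_range.1 hn))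
    (fun _ _ => rfl)

lemma dft_comp_val (Φ : ℕ → ℂ) (k : ℕ) :
    𝓕 (fun x : ZMod N => Φ x.val) k
      = ∑ n ∈ Finset.range N, Φ n * exp (-(2 * Real.pi * I * k * n) / N) := by
  rw [dft_apply, ← sum_comp_val]
  refine Finset.sum_congr rfl fun x _ => ?_
  have h : stdAddChar (-(x * (k : ZMod N)))
      = exp (2 * Real.pi * I * ((-(x.val * k) : ℤ) : ℂ) / N) := by
    rw [← stdAddChar_coe]
    push_cast
    rw [natCast_zmod_val]
  rw [smul_eq_mul, h, mul_comm]
  push_cast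
  ring_nf

lemma invDFT_comp_val (Ψ : ℕ → ℂ) (n : ℕ) :
    𝓕⁻ (fun x : ZMod N => Ψ x.val) n
      = (N : ℂ)⁻¹ * ∑ j ∈ Finset.range N, Ψ j * exp (2 * Real.pi * I * j * n / N) := by
  rw [invDFT_apply, ← sum_comp_val, smul_eq_mul]
  congr 1
  refine Finset.sum_congr rfl fun x _ => ?_
  have h : stdAddChar (x * (n : ZMod N)) = exp (2 * Real.pi * I * (x.val * n : ℕ) / N) := by
    rw [stdAddChar_apply, ← toCircle_natCast, Nat.cast_mul, natCast_zmod_val]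
  rw [smul_eq_mul, h, mul_comm]
  push_cast
  ring_nf

end ZMod

open ZMod

theorem stmt_16_general (N : ℕ) (hN : Odd N)
    (c : ℕ → ℝ) (hc0 : c 0 = 0)
    (hc : ∀ n : ℕ, 1 ≤ n → n ≤ N - 1 →
      c n = (1 - (-1 : ℝ) ^ n) / (2 * N)
              * (Real.cos (Real.pi * n / (2 * N)) / Real.sin (Real.pi * n / (2 * N)))
            - (1 + (-1 : ℝ) ^ n) / (2 * N) * Real.tan (Real.pi * n / (2 * N))) :
    ∀ k : ℕ, k ≤ N - 1 →
      (∑ n ∈ Finset.range N, (c n : ℂ)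
          * Complex.exp (-(2 * Real.pi * Complex.I * k * n) / N))
        = if k = 0 then 0 else if k ≤ (N - 1) / 2 then -Complex.I else Complex.I := by
  intro k hk
  have : NeZero N := ⟨hN.pos.ne'⟩
  have hsin : ∀ n < N, (N : ℝ) * c n
      = ∑ j ∈ Finset.range ((N - 1) / 2), 2 * Real.sin ((j + 1) * (2 * Real.pi * n / N)) := by
    intro n hn
    rcases Nat.eq_zero_or_pos n with rfl | hn0
    · simp [hc0]
    · rw [hc n hn0 (by omega)]
      exact cot_tan_coeff_eq_sum_sin hN hn0 hn
  have hinv : (fun x : ZMod N => (c x.val : ℂ)) = 𝓕⁻ (fun x => hilbertMultiplier N x.val) := by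
    funext x
    obtain ⟨n, hn, rfl⟩ : ∃ n < N, (n : ZMod N) = x := ⟨x.val, x.val_lt, natCast_zmod_val x⟩
    rw [val_natCast_of_lt hn, invDFT_comp_val, sum_hilbertMultiplier_mul_exp hN, ← hsin n hn,
      ofReal_mul, ofReal_natCast, inv_mul_cancel_left₀ (Nat.cast_ne_zero.2 (NeZero.ne N))]
  rw [← dft_comp_val (fun n => (c n : ℂ)), hinv, LinearEquiv.apply_symm_apply,
    val_natCast_of_lt (Nat.lt_of_le_pred hN.pos hk)]
  rfl

theorem stmt_16 (N : ℕ) (hN : Odd N) (hN3 : 3 ≤ N)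
    (c : ℕ → ℝ) (hc0 : c 0 = 0)
    (hc : ∀ n : ℕ, 1 ≤ n → n ≤ N - 1 →
      c n = (1 - (-1 : ℝ) ^ n) / (2 * N)
              * (Real.cos (Real.pi * n / (2 * N)) / Real.sin (Real.pi * n / (2 * N)))
            - (1 + (-1 : ℝ) ^ n) / (2 * N) * Real.tan (Real.pi * n / (2 * N))) :
    ∀ k : ℕ, k ≤ N - 1 →
      (∑ n ∈ Finset.range N, (c n : ℂ)
          * Complex.exp (-(2 * Real.pi * Complex.I * k * n) / N))
        = if k = 0 then 0 else if k ≤ (N - 1) / 2 then -Complex.I else Complex.I :=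
  stmt_16_general N hN c hc0 hc
end

section
/- Discrete Sobolev inequality: for every u ∈ ℓ²(ℤ), ‖D₋u‖_∞ ≤ √(3/2)(‖D₊D₋u‖ + ‖u‖), where ‖·‖ is the discrete L² norm with weight Δx. -/
open Filter Topology

noncomputable def discreteL2Norm (Δx : ℝ) (u : ℤ → ℝ) : ℝ := √(Δx * ∑' j, u j ^ 2)

section SquareSummable

variable {ι : Type*} {a b : ι → ℝ}

theorem summable_abs_mul_and_tsum_abs_mul_le (ha : Summable fun i => a i ^ 2)
    (hb : Summable fun i => b i ^ 2) :
    (Summable fun i => |a i * b i|) ∧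
      ∑' i, |a i * b i| ≤ √(∑' i, a i ^ 2) * √(∑' i, b i ^ 2) := by
  have h := Real.summable_and_inner_le_Lp_mul_Lq_tsum_of_nonneg Real.HolderConjugate.two_two
    (fun i => abs_nonneg (a i)) (fun i => abs_nonneg (b i)) (by simpa using ha) (by simpa using hb)
  simpa [abs_mul, Real.sqrt_eq_rpow] using h

theorem Summable.abs_mul_of_sq (ha : Summable fun i => a i ^ 2)
    (hb : Summable fun i => b i ^ 2) : Summable fun i => |a i * b i| :=
  (summable_abs_mul_and_tsum_abs_mul_le ha hb).1

theorem tsum_abs_mul_le_sqrt_mul_sqrt (ha : Summable fun i => a i ^ 2)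
    (hb : Summable fun i => b i ^ 2) :
    ∑' i, |a i * b i| ≤ √(∑' i, a i ^ 2) * √(∑' i, b i ^ 2) :=
  (summable_abs_mul_and_tsum_abs_mul_le ha hb).2

theorem Summable.sq_sub (ha : Summable fun i => a i ^ 2) (hb : Summable fun i => b i ^ 2) :
    Summable fun i => (a i - b i) ^ 2 :=
  .of_nonneg_of_le (fun i => sq_nonneg _)
    (fun i => by nlinarith [sq_nonneg (a i + b i)]) ((ha.add hb).mul_left 2)

end SquareSummable

theorem le_tsum_of_sub_succ_le {f g : ℤ → ℝ} (hf : Tendsto f atTop (𝓝 0)) (hg : Summable g)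
    (hg0 : ∀ k, 0 ≤ g k) (hfg : ∀ k, f k - f (k + 1) ≤ g k) (j : ℤ) : f j ≤ ∑' k, g k := by
  have hinj : Function.Injective fun i : ℕ => j + i :=
    (add_right_injective j).comp Nat.cast_injective
  have hpartial (n : ℕ) : f j - f (j + n) ≤ ∑' k, g k :=
    calc f j - f (j + n) = ∑ i ∈ Finset.range n, (f (j + i) - f (j + (i + 1 : ℕ))) := by
          rw [Finset.sum_range_sub']; simp
      _ ≤ ∑ i ∈ Finset.range n, g (j + i) :=
          Finset.sum_le_sum fun i _ => by simpa [add_assoc] using hfg (j + i)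
      _ ≤ ∑' i : ℕ, g (j + i) :=
          (hg.comp_injective hinj).sum_le_tsum _ fun i _ => hg0 _
      _ ≤ ∑' k, g k := tsum_comp_le_tsum_of_inj hg hg0 hinj
  have hlim : Tendsto (fun n : ℕ => f j - f (j + n)) atTop (𝓝 (f j)) := by
    simpa using tendsto_const_nhds.sub
      (hf.comp (tendsto_atTop_add_const_left _ j tendsto_natCast_atTop_atTop))
  exact le_of_tendsto' hlim hpartial

section GridFunctions

variable {Δx : ℝ} {a b u : ℤ → ℝ}

theorem discreteL2Norm_mul_discreteL2Norm (hΔx : 0 ≤ Δx) (a b : ℤ → ℝ) :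
    discreteL2Norm Δx a * discreteL2Norm Δx b =
      Δx * (√(∑' j, a j ^ 2) * √(∑' j, b j ^ 2)) := by
  rw [discreteL2Norm, discreteL2Norm, Real.sqrt_mul hΔx, Real.sqrt_mul hΔx]
  linear_combination (√(∑' j, a j ^ 2) * √(∑' j, b j ^ 2)) * Real.mul_self_sqrt hΔx

theorem sq_discreteL2Norm (hΔx : 0 ≤ Δx) (a : ℤ → ℝ) :
    discreteL2Norm Δx a ^ 2 = Δx * ∑' j, a j ^ 2 :=
  Real.sq_sqrt (mul_nonneg hΔx (tsum_nonneg fun _ => sq_nonneg _))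

theorem summable_sq_Dm (Δx : ℝ) (ha : Summable fun j => a j ^ 2) :
    Summable fun j => Dm Δx a j ^ 2 := by
  have ha1 : Summable fun j => a (j - 1) ^ 2 := (Equiv.subRight (1 : ℤ)).summable_iff.2 ha
  simpa only [Dm, div_pow] using (ha.sq_sub ha1).div_const (Δx ^ 2)

theorem tsum_Dp_mul_eq_neg_tsum_mul_Dm (Δx : ℝ) (ha : Summable fun j => a j ^ 2)
    (hb : Summable fun j => b j ^ 2) :
    ∑' j, Dp Δx a j * b j = -∑' j, a j * Dm Δx b j := by
  have hab : Summable fun j => a j * b j := (ha.abs_mul_of_sq hb).of_abs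
  have habSucc : Summable fun j => a (j + 1) * b j :=
    (((Equiv.addRight (1 : ℤ)).summable_iff.2 ha).abs_mul_of_sq hb).of_abs
  have habPred : Summable fun j => a j * b (j - 1) :=
    (ha.abs_mul_of_sq ((Equiv.subRight (1 : ℤ)).summable_iff.2 hb)).of_abs
  have hshift : ∑' j, a (j + 1) * b j = ∑' j, a j * b (j - 1) := by
    simpa using ((Equiv.subRight (1 : ℤ)).tsum_eq fun j => a (j + 1) * b j).symm
  have hDp : ∑' j, Dp Δx a j * b j = (∑' j, a (j + 1) * b j - ∑' j, a j * b j) / Δx := by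
    rw [← habSucc.tsum_sub hab, ← tsum_div_const]
    exact tsum_congr fun j => by rw [Dp]; ring
  have hDm : ∑' j, a j * Dm Δx b j = (∑' j, a j * b j - ∑' j, a j * b (j - 1)) / Δx := by
    rw [← hab.tsum_sub habPred, ← tsum_div_const]
    exact tsum_congr fun j => by rw [Dm]; ring
  rw [hDp, hDm, hshift]
  ring

theorem sq_le_two_mul_discreteL2Norm_Dp_mul (hΔx : 0 < Δx) (ha : Summable fun j => a j ^ 2)
    (hDa : Summable fun j => Dp Δx a j ^ 2) (j : ℤ) :
    a j ^ 2 ≤ 2 * discreteL2Norm Δx (Dp Δx a) * discreteL2Norm Δx a := by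
  have haSucc : Summable fun k => a (k + 1) ^ 2 := (Equiv.addRight (1 : ℤ)).summable_iff.2 ha
  have hshift : ∑' k, a (k + 1) ^ 2 = ∑' k, a k ^ 2 :=
    (Equiv.addRight (1 : ℤ)).tsum_eq fun k => a k ^ 2
  set g : ℤ → ℝ := fun k => Δx * (|Dp Δx a k * a (k + 1)| + |Dp Δx a k * a k|)
  have hg : Summable g := ((hDa.abs_mul_of_sq haSucc).add (hDa.abs_mul_of_sq ha)).mul_left Δx
  have hstep (k : ℤ) : a k ^ 2 - a (k + 1) ^ 2 ≤ g k := by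
    have hdiff : a k ^ 2 - a (k + 1) ^ 2 = -(Δx * (Dp Δx a k * a (k + 1) + Dp Δx a k * a k)) := by
      rw [Dp]; field_simp; ring
    rw [hdiff]
    refine (neg_le_abs _).trans ?_
    rw [abs_mul, abs_of_pos hΔx]
    exact mul_le_mul_of_nonneg_left (abs_add_le _ _) hΔx.le
  have hlim : Tendsto (fun k => a k ^ 2) atTop (𝓝 0) :=
    ha.tendsto_cofinite_zero.mono_left (Int.cofinite_eq ▸ le_sup_right)
  calc a j ^ 2 ≤ ∑' k, g k := le_tsum_of_sub_succ_le hlim hg (fun k => by positivity) hstep j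
    _ = Δx * (∑' k, |Dp Δx a k * a (k + 1)| + ∑' k, |Dp Δx a k * a k|) := by
        rw [tsum_mul_left, (hDa.abs_mul_of_sq haSucc).tsum_add (hDa.abs_mul_of_sq ha)]
    _ ≤ Δx * (√(∑' k, Dp Δx a k ^ 2) * √(∑' k, a k ^ 2)
          + √(∑' k, Dp Δx a k ^ 2) * √(∑' k, a k ^ 2)) := by
        gcongr
        · simpa only [hshift] using tsum_abs_mul_le_sqrt_mul_sqrt hDa haSucc
        · exact tsum_abs_mul_le_sqrt_mul_sqrt hDa ha
    _ = 2 * discreteL2Norm Δx (Dp Δx a) * discreteL2Norm Δx a := by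
        rw [mul_assoc, discreteL2Norm_mul_discreteL2Norm hΔx.le]
        ring

theorem sq_discreteL2Norm_Dm_le (hΔx : 0 ≤ Δx) (hu : Summable fun j => u j ^ 2)
    (hDDu : Summable fun j => Dp Δx (Dm Δx u) j ^ 2) :
    discreteL2Norm Δx (Dm Δx u) ^ 2 ≤
      discreteL2Norm Δx (Dp Δx (Dm Δx u)) * discreteL2Norm Δx u := by
  have hparts := tsum_Dp_mul_eq_neg_tsum_mul_Dm Δx (summable_sq_Dm Δx hu) hu
  calc discreteL2Norm Δx (Dm Δx u) ^ 2 = Δx * -∑' j, Dp Δx (Dm Δx u) j * u j := by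
        rw [sq_discreteL2Norm hΔx, hparts, neg_neg]
        simp only [sq]
    _ ≤ Δx * ∑' j, |Dp Δx (Dm Δx u) j * u j| := by
        gcongr
        refine (neg_le_abs _).trans ?_
        simpa only [Real.norm_eq_abs] using
          norm_tsum_le_tsum_norm (f := fun j => Dp Δx (Dm Δx u) j * u j)
            (by simpa only [Real.norm_eq_abs] using hDDu.abs_mul_of_sq hu)
    _ ≤ Δx * (√(∑' j, Dp Δx (Dm Δx u) j ^ 2) * √(∑' j, u j ^ 2)) := by
        gcongr
        exact tsum_abs_mul_le_sqrt_mul_sqrt hDDu hu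
    _ = _ := (discreteL2Norm_mul_discreteL2Norm hΔx _ _).symm

theorem abs_Dm_le_discreteL2Norm_add (hΔx : 0 < Δx) (hu : Summable fun j => u j ^ 2)
    (hDDu : Summable fun j => Dp Δx (Dm Δx u) j ^ 2) (j : ℤ) :
    |Dm Δx u j| ≤ discreteL2Norm Δx (Dp Δx (Dm Δx u)) + discreteL2Norm Δx u := by
  set W := discreteL2Norm Δx (Dp Δx (Dm Δx u))
  set U := discreteL2Norm Δx u
  set V := discreteL2Norm Δx (Dm Δx u)
  have hW : 0 ≤ W := Real.sqrt_nonneg _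
  have hU : 0 ≤ U := Real.sqrt_nonneg _
  have hV : 0 ≤ V := Real.sqrt_nonneg _
  have hVWU : V ^ 2 ≤ W * U := sq_discreteL2Norm_Dm_le hΔx.le hu hDDu
  have hagmon : Dm Δx u j ^ 2 ≤ 2 * W * V :=
    sq_le_two_mul_discreteL2Norm_Dp_mul hΔx (summable_sq_Dm Δx hu) hDDu j
  have hV_le : V ≤ (W + U) / 2 := by nlinarith [sq_nonneg (W - U)]
  exact abs_le_of_sq_le_sq (by nlinarith [mul_le_mul_of_nonneg_left hV_le hW]) (add_nonneg hW hU)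

end GridFunctions

theorem stmt_18 (Δx : ℝ) (hΔx : 0 < Δx) (u : ℤ → ℝ)
    (hu : Summable (fun j => (u j) ^ 2))
    (hDDu : Summable (fun j => (Dp Δx (Dm Δx u) j) ^ 2)) :
    ∀ j : ℤ, |Dm Δx u j| ≤ Real.sqrt (3 / 2)
      * (Real.sqrt (Δx * ∑' i : ℤ, (Dp Δx (Dm Δx u) i) ^ 2)
         + Real.sqrt (Δx * ∑' i : ℤ, (u i) ^ 2)) := by
  intro j
  have hone : (1 : ℝ) ≤ √(3 / 2) := Real.one_le_sqrt.2 (by norm_num)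
  calc |Dm Δx u j| ≤ discreteL2Norm Δx (Dp Δx (Dm Δx u)) + discreteL2Norm Δx u :=
        abs_Dm_le_discreteL2Norm_add hΔx hu hDDu j
    _ ≤ √(3 / 2) * (discreteL2Norm Δx (Dp Δx (Dm Δx u)) + discreteL2Norm Δx u) :=
        le_mul_of_one_le_left (add_nonneg (Real.sqrt_nonneg _) (Real.sqrt_nonneg _)) hone
end
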